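/- With P_n defined by q^{2n+ν+1}P_{n+1}(λ) - q^{2n}(1+q^{2ν})P_n(λ) + q^{2n+ν-1}P_{n-1}(λ) = λP_n(λ), P_{-1}=0, P_0=1, one has for all n ≥ 0 and λ ∈ ℂ \ {0}: P_n(-λ²) = q^{-n(ν+1)} λ^{2ν} (q^{-2ν}-1)^{-1} [j_ν(q^{-n}λ;q²)γ_ν(qλ) - γ_ν(q^{-n}λ)j_ν(qλ;q²)], where γ_ν(x) = x^{-2ν}j_{-ν}(q^{-ν}x;q²). -/

import Mathlib

/-!
Both `j_ν(x; q²)` and `γ_ν(x)` solve the q-difference equation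
`f(x) - (1 + q^{2ν}) f(qx) + q^{2ν} f(q²x) = -(qx)² f(qx)`, so after the gauge factor
`q^{-n(ν+1)}` the right-hand side, as a function of `n`, satisfies the recurrence of `P_n`.
It vanishes at `n = -1` trivially, and equals `1` at `n = 0` because the Casoratian
`j_ν(x) γ_ν(qx) - γ_ν(x) j_ν(qx)` is `x^{-2ν}` times a function that is invariant under
`x ↦ qx` and continuous at `0`, hence equal to `(q^{-2ν} - 1) x^{-2ν}`. A three-term
recurrence with nonvanishing leading coefficient has a unique solution with given values at
`-1` and `0`.
-/
open scoped BigOperators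

noncomputable def qPochC (q a : ℂ) (n : ℕ) : ℂ := ∏ i ∈ Finset.range n, (1 - a * q ^ i)

noncomputable def jC (q α : ℝ) (x : ℂ) : ℂ :=
  ∑' n : ℕ, (-1) ^ n * (q : ℂ) ^ (n * (n + 1)) * x ^ (2 * n) /
    (qPochC ((q : ℂ) ^ 2) ((q : ℂ) ^ 2) n *
      qPochC ((q : ℂ) ^ 2) (((q ^ (2 * α + 2) : ℝ) : ℂ)) n)

/-- `γ_ν(x) = x^{-2ν} j_{-ν}(q^{-ν} x; q²)`. -/
noncomputable def gammaC (q ν : ℝ) (x : ℂ) : ℂ :=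
  x ^ ((-(2 * ν) : ℝ) : ℂ) * jC q (-ν) (((q ^ (-ν) : ℝ) : ℂ) * x)

open Filter Topology

noncomputable def jTerm (Q a x : ℂ) (k : ℕ) : ℂ :=
  (-1) ^ k * Q ^ (k * (k + 1)) * x ^ (2 * k) / (qPochC (Q ^ 2) (Q ^ 2) k * qPochC (Q ^ 2) a k)

noncomputable def jSeries (Q a x : ℂ) : ℂ := ∑' k, jTerm Q a x k

lemma jC_eq_jSeries (q α : ℝ) : jC q α = jSeries q ((q ^ (2 * α + 2) : ℝ) : ℂ) := rfl

lemma jTerm_mul_left (Q a y x : ℂ) (k : ℕ) : jTerm Q a (y * x) k = y ^ (2 * k) * jTerm Q a x k := by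
  simp only [jTerm, mul_pow]
  ring

lemma jTerm_succ_mul {Q a : ℂ} (x : ℂ) {k : ℕ}
    (hk : (1 - Q ^ 2 * (Q ^ 2) ^ k) * (1 - a * (Q ^ 2) ^ k) ≠ 0) :
    jTerm Q a x (k + 1) * ((1 - Q ^ 2 * (Q ^ 2) ^ k) * (1 - a * (Q ^ 2) ^ k)) =
      -(Q ^ 2 * (Q ^ 2) ^ k * x ^ 2) * jTerm Q a x k := by
  simp only [jTerm, qPochC, Finset.prod_range_succ]
  rw [mul_mul_mul_comm, div_mul_eq_mul_div, mul_div_mul_right _ _ hk]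
  ring

lemma norm_jTerm_le {Q a x y : ℂ} (h : ‖x‖ ≤ ‖y‖) (k : ℕ) :
    ‖jTerm Q a x k‖ ≤ ‖jTerm Q a y k‖ := by
  simp only [jTerm, norm_div, norm_mul, norm_pow]
  gcongr

lemma summable_jTerm {Q : ℂ} (hQ : ‖Q‖ < 1) (a x : ℂ) : Summable (jTerm Q a x) := by
  have ht : Tendsto (fun k : ℕ => (Q ^ 2) ^ k) atTop (𝓝 0) :=
    tendsto_pow_atTop_nhds_zero_of_norm_lt_one
      (by rw [norm_pow]; exact pow_lt_one₀ (norm_nonneg _) hQ two_ne_zero)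
  have hD : Tendsto (fun k : ℕ => (1 - Q ^ 2 * (Q ^ 2) ^ k) * (1 - a * (Q ^ 2) ^ k)) atTop
      (𝓝 1) := by
    simpa using ((tendsto_const_nhds (x := (1 : ℂ))).sub (ht.const_mul (Q ^ 2))).mul
      ((tendsto_const_nhds (x := (1 : ℂ))).sub (ht.const_mul a))
  have hnum : Tendsto (fun k : ℕ => ‖Q ^ 2 * (Q ^ 2) ^ k * x ^ 2‖) atTop (𝓝 0) := by
    simpa only [mul_zero, zero_mul, norm_zero] using
      ((ht.const_mul (Q ^ 2)).mul_const (x ^ 2)).norm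
  have hratio : Tendsto (fun k : ℕ => ‖Q ^ 2 * (Q ^ 2) ^ k * x ^ 2‖ /
      ‖(1 - Q ^ 2 * (Q ^ 2) ^ k) * (1 - a * (Q ^ 2) ^ k)‖) atTop (𝓝 0) := by
    simpa only [norm_one, div_one, Pi.div_def] using hnum.div hD.norm (by norm_num)
  refine summable_of_ratio_norm_eventually_le (r := 1 / 2) (by norm_num) ?_
  filter_upwards [hD.eventually_ne one_ne_zero,
    hratio.eventually (eventually_le_nhds (by norm_num : (0 : ℝ) < 1 / 2))] with k hk hrk
  have hnorm : ‖jTerm Q a x (k + 1)‖ * ‖(1 - Q ^ 2 * (Q ^ 2) ^ k) * (1 - a * (Q ^ 2) ^ k)‖ =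
      ‖Q ^ 2 * (Q ^ 2) ^ k * x ^ 2‖ * ‖jTerm Q a x k‖ := by
    rw [← norm_mul, ← norm_neg (Q ^ 2 * _ * _), ← norm_mul, jTerm_succ_mul x hk]
  rw [← eq_div_iff (norm_ne_zero_iff.2 hk)] at hnorm
  rw [hnorm, mul_div_right_comm]
  exact mul_le_mul_of_nonneg_right hrk (norm_nonneg _)

lemma continuous_jSeries {Q : ℂ} (hQ : ‖Q‖ < 1) (a : ℂ) : Continuous (jSeries Q a) := by
  refine continuous_iff_continuousAt.2 fun x => ?_
  have hR : (0 : ℝ) ≤ ‖x‖ + 1 := by positivity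
  have hball : ContinuousOn (jSeries Q a) (Metric.ball 0 (‖x‖ + 1)) := by
    refine continuousOn_tsum (u := fun k => ‖jTerm Q a (‖x‖ + 1 : ℝ) k‖) (fun k => ?_)
      ((summable_jTerm hQ a _).norm) fun k y hy => norm_jTerm_le ?_ k
    · unfold jTerm
      fun_prop
    · rw [mem_ball_zero_iff] at hy
      rw [Complex.norm_real, Real.norm_of_nonneg hR]
      exact hy.le
  exact hball.continuousAt (Metric.isOpen_ball.mem_nhds (by simp))

lemma jSeries_zero (Q a : ℂ) : jSeries Q a 0 = 1 := by
  rw [jSeries, tsum_eq_single 0 fun k hk => by simp [jTerm, hk]]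
  simp [jTerm, qPochC]

def IsQDiffSol (Q b : ℂ) (f : ℂ → ℂ) : Prop :=
  ∀ x, f x - (1 + b) * f (Q * x) + b * f (Q ^ 2 * x) = -(Q * x) ^ 2 * f (Q * x)

lemma one_sub_sq_mul_pow_ne_zero {Q : ℂ} (hQ : ‖Q‖ < 1) (k : ℕ) : 1 - Q ^ 2 * (Q ^ 2) ^ k ≠ 0 := by
  rw [sub_ne_zero, ne_comm, ← pow_succ', ← pow_mul]
  refine fun h => (pow_lt_one₀ (norm_nonneg Q) hQ (by omega : 2 * (k + 1) ≠ 0)).ne ?_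
  rw [← norm_pow, h, norm_one]

lemma isQDiffSol_jSeries {Q b : ℂ} (hQ : ‖Q‖ < 1)
    (hb : ∀ i : ℕ, 1 - b * Q ^ 2 * (Q ^ 2) ^ i ≠ 0) :
    IsQDiffSol Q b (jSeries Q (b * Q ^ 2)) := by
  intro x
  set t := jTerm Q (b * Q ^ 2)
  -- `w k = (1 - Q^{2k}) (1 - b Q^{2k}) t x k`, so `w 0 = 0` and the series telescopes
  set w : ℕ → ℂ := fun k => t x k - (1 + b) * t (Q * x) k + b * t (Q ^ 2 * x) k with hw_def
  have hsum : ∀ y, Summable (t y) := summable_jTerm hQ _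
  have hw : Summable w := ((hsum _).sub ((hsum _).mul_left _)).add ((hsum _).mul_left _)
  have hw0 : w 0 = 0 := by simp [w, t, jTerm, qPochC]
  have hsucc : ∀ k, w (k + 1) = -(Q * x) ^ 2 * t (Q * x) k := fun k => by
    have h := jTerm_succ_mul x (mul_ne_zero (one_sub_sq_mul_pow_ne_zero hQ k) (hb k))
      (a := b * Q ^ 2)
    simp only [w, t, jTerm_mul_left]
    linear_combination h
  calc jSeries Q (b * Q ^ 2) x - (1 + b) * jSeries Q (b * Q ^ 2) (Q * x)
        + b * jSeries Q (b * Q ^ 2) (Q ^ 2 * x) = ∑' k, w k := by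
        simp only [jSeries, hw_def]
        rw [(((hsum _).sub ((hsum _).mul_left _))).tsum_add ((hsum _).mul_left _),
          (hsum _).tsum_sub ((hsum _).mul_left _), tsum_mul_left, tsum_mul_left]
    _ = w 0 + ∑' k, w (k + 1) := hw.tsum_eq_zero_add
    _ = -(Q * x) ^ 2 * jSeries Q (b * Q ^ 2) (Q * x) := by
        rw [hw0, zero_add, tsum_congr hsucc, tsum_mul_left]
        rfl

namespace IsQDiffSol

variable {Q b : ℂ} {f g : ℂ → ℂ}

lemma mul_const_sub_mul_const (hf : IsQDiffSol Q b f) (hg : IsQDiffSol Q b g) (α β : ℂ) :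
    IsQDiffSol Q b (fun x => f x * α - g x * β) := fun x => by
  linear_combination α * hf x - β * hg x

lemma comp_mul_left {b' d : ℂ} {φ : ℂ → ℂ} (hf : IsQDiffSol Q b' f) (hbb : b * b' = 1)
    (hd : d ^ 2 = b') (hφ : ∀ x, φ (Q * x) = b' * φ x) :
    IsQDiffSol Q b (fun x => φ x * f (d * x)) := fun x => by
  have h := hf (d * x)
  rw [show Q * (d * x) = d * (Q * x) by ring, show Q ^ 2 * (d * x) = d * (Q ^ 2 * x) by ring] at h
  dsimp only
  rw [show Q ^ 2 * x = Q * (Q * x) by ring, hφ (Q * x), hφ x] at *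
  linear_combination φ x * h + φ x * (b' * f (d * (Q * (Q * x))) - f (d * (Q * x))) * hbb
    - φ x * (Q * x) ^ 2 * f (d * (Q * x)) * hd

lemma zpow_recurrence (hf : IsQDiffSol Q b f) (hQ : Q ≠ 0) (lam : ℂ) (m : ℤ) :
    f (Q ^ (-(m + 1)) * lam) - (1 + b) * f (Q ^ (-m) * lam) + b * f (Q ^ (-(m - 1)) * lam) =
      -(Q ^ (-m) * lam) ^ 2 * f (Q ^ (-m) * lam) := by
  have h₁ : Q * (Q ^ (-(m + 1)) * lam) = Q ^ (-m) * lam := by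
    rw [← mul_assoc, ← zpow_one_add₀ hQ]; ring_nf
  have h₂ : Q ^ 2 * (Q ^ (-(m + 1)) * lam) = Q ^ (-(m - 1)) * lam := by
    rw [← mul_assoc, ← zpow_ofNat, ← zpow_add₀ hQ]; ring_nf
  simpa only [h₁, h₂] using hf (Q ^ (-(m + 1)) * lam)

end IsQDiffSol

lemma eq_apply_zero_of_apply_mul_eq {𝕜 E : Type*} [NormedField 𝕜] [TopologicalSpace E]
    [T2Space E] {Q : 𝕜} (hQ : ‖Q‖ < 1) {W : 𝕜 → E} (hW : ContinuousAt W 0)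
    (h : ∀ x, W (Q * x) = W x) (x : 𝕜) : W x = W 0 := by
  have hpow : ∀ k : ℕ, W (Q ^ k * x) = W x := fun k => by
    induction k with
    | zero => simp
    | succ k ih => rw [pow_succ', mul_assoc, h, ih]
  have hlim : Tendsto (fun k : ℕ => Q ^ k * x) atTop (𝓝 0) := by
    simpa using (tendsto_pow_atTop_nhds_zero_of_norm_lt_one hQ).mul_const x
  have hW' := hW.tendsto.comp hlim
  simp only [Function.comp_def, hpow] at hW'
  exact tendsto_nhds_unique tendsto_const_nhds hW'

lemma IsQDiffSol.wronskian {Q b b' d : ℂ} {u v φ : ℂ → ℂ} (hQ : ‖Q‖ < 1)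
    (hu : IsQDiffSol Q b u) (hv : IsQDiffSol Q b' v) (hbb : b * b' = 1) (hd : d ^ 2 = b')
    (huc : Continuous u) (hvc : Continuous v) {x : ℂ} (hφ : φ (Q * x) = b' * φ x) :
    u x * (φ (Q * x) * v (d * (Q * x))) - φ x * v (d * x) * u (Q * x) =
      (b' - 1) * φ x * (u 0 * v 0) := by
  set W : ℂ → ℂ := fun x => u x * v (d * (Q * x)) - b * v (d * x) * u (Q * x)
  have hW : ∀ x, W (Q * x) = W x := fun x => by
    have hv' := hv (d * x)
    rw [show Q * (d * x) = d * (Q * x) by ring, show Q ^ 2 * (d * x) = d * (Q * (Q * x)) by ring]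
      at hv'
    have hu' := hu x
    rw [show Q ^ 2 * x = Q * (Q * x) by ring] at hu'
    simp only [W]
    linear_combination (-v (d * (Q * x))) * hu' + b * u (Q * x) * hv'
      - (u (Q * x) * v (d * (Q * (Q * x))) - u (Q * x) * v (d * (Q * x))
        + (Q * x) ^ 2 * u (Q * x) * v (d * (Q * x))) * hbb
      - b * (Q * x) ^ 2 * u (Q * x) * v (d * (Q * x)) * hd
  have hW0 : W x = W 0 :=
    eq_apply_zero_of_apply_mul_eq hQ (by simp only [W]; fun_prop) hW x
  simp only [W, mul_zero] at hW0
  rw [hφ]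
  linear_combination b' * φ x * hW0 + (φ x * v (d * x) * u (Q * x) - u 0 * v 0 * φ x) * hbb

lemma eq_of_threeTerm_recurrence {K : Type*} [Field K] {u v : ℤ → K} (a b c : ℕ → K)
    (ha : ∀ n, a n ≠ 0)
    (hu : ∀ n : ℕ, a n * u (n + 1) - b n * u n + c n * u (n - 1) = 0)
    (hv : ∀ n : ℕ, a n * v (n + 1) - b n * v n + c n * v (n - 1) = 0)
    (h_neg_one : u (-1) = v (-1)) (h_zero : u 0 = v 0) (n : ℕ) : u n = v n := by
  suffices h : ∀ n : ℕ, u (n - 1) = v (n - 1) ∧ u n = v n from (h n).2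
  intro n
  induction n with
  | zero => exact ⟨h_neg_one, h_zero⟩
  | succ n ih =>
    refine ⟨by simpa using ih.2, ?_⟩
    push_cast
    exact mul_left_cancel₀ (ha n)
      (by linear_combination hu n - hv n + b n * ih.2 - c n * ih.1)

section RealPowers

variable {q : ℝ}

lemma ofReal_rpow_mul_ofReal_rpow (hq : 0 < q) {s t u : ℝ} (h : s + t = u) :
    ((q ^ s : ℝ) : ℂ) * ((q ^ t : ℝ) : ℂ) = ((q ^ u : ℝ) : ℂ) := by
  rw [← Complex.ofReal_mul, ← Real.rpow_add hq, h]

lemma ofReal_rpow_ne_one (hq0 : 0 < q) (hq1 : q ≠ 1) {e : ℝ} (he : e ≠ 0) :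
    ((q ^ e : ℝ) : ℂ) ≠ 1 := by
  rwa [Ne, ← Complex.ofReal_one, Complex.ofReal_inj, ← Real.rpow_zero q,
    Real.rpow_right_inj hq0 hq1]

lemma ofReal_sq_mul_pow (q : ℝ) (i : ℕ) :
    (q : ℂ) ^ 2 * ((q : ℂ) ^ 2) ^ i = ((q ^ (2 + 2 * (i : ℝ)) : ℝ) : ℂ) := by
  rw [← pow_mul, ← pow_add, ← Complex.ofReal_pow, ← Real.rpow_natCast]
  push_cast
  rfl

lemma ofReal_mul_cpow {r : ℝ} (hr : 0 < r) (z w : ℂ) :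
    ((r : ℂ) * z) ^ w = (r : ℂ) ^ w * z ^ w := by
  have hr' : (r : ℂ) ≠ 0 := Complex.ofReal_ne_zero.2 hr.ne'
  rcases eq_or_ne z 0 with rfl | hz
  · rcases eq_or_ne w 0 with rfl | hw <;> simp [*]
  rw [Complex.cpow_def_of_ne_zero (mul_ne_zero hr' hz), Complex.log_ofReal_mul hr hz, add_mul,
    Complex.exp_add, ← Complex.cpow_def_of_ne_zero hz, Complex.cpow_def_of_ne_zero hr',
    Complex.ofReal_log hr.le]

lemma ofReal_zpow_neg_sq (q : ℝ) (m : ℤ) :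
    ((q : ℂ) ^ (-m)) ^ 2 = ((q ^ (-2 * (m : ℝ)) : ℝ) : ℂ) := by
  rw [← zpow_natCast, ← zpow_mul, ← Complex.ofReal_zpow, ← Real.rpow_intCast]
  push_cast
  ring_nf

variable (hq : 0 < q) (ν : ℝ)
include hq

lemma ofReal_rpow_two_mul_mul_neg :
    ((q ^ (2 * ν) : ℝ) : ℂ) * ((q ^ (-(2 * ν)) : ℝ) : ℂ) = 1 := by
  rw [ofReal_rpow_mul_ofReal_rpow hq (add_neg_cancel _), Real.rpow_zero, Complex.ofReal_one]

lemma ofReal_rpow_neg_sq : ((q ^ (-ν) : ℝ) : ℂ) ^ 2 = ((q ^ (-(2 * ν)) : ℝ) : ℂ) := by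
  rw [sq, ofReal_rpow_mul_ofReal_rpow hq (u := -(2 * ν)) (by ring)]

lemma ofReal_mul_cpow_neg_two_mul (x : ℂ) :
    ((q : ℂ) * x) ^ ((-(2 * ν) : ℝ) : ℂ) =
      ((q ^ (-(2 * ν)) : ℝ) : ℂ) * x ^ ((-(2 * ν) : ℝ) : ℂ) := by
  rw [ofReal_mul_cpow hq, Complex.ofReal_cpow hq.le]

end RealPowers

section

variable {q : ℝ}

lemma isQDiffSol_jC (hq0 : 0 < q) (hq1 : q < 1) {α : ℝ} (hα : ∀ i : ℕ, α ≠ -(i + 1)) :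
    IsQDiffSol q ((q ^ (2 * α) : ℝ) : ℂ) (jC q α) := by
  have hQ : ‖(q : ℂ)‖ < 1 := by rwa [Complex.norm_real, Real.norm_of_nonneg hq0.le]
  have hpow : ∀ i : ℕ, ((q ^ (2 * α) : ℝ) : ℂ) * (q : ℂ) ^ 2 * ((q : ℂ) ^ 2) ^ i =
      ((q ^ (2 * α + (2 + 2 * (i : ℝ))) : ℝ) : ℂ) := fun i => by
    rw [mul_assoc, ofReal_sq_mul_pow, ofReal_rpow_mul_ofReal_rpow hq0 rfl]
  have ha : ((q ^ (2 * α + 2) : ℝ) : ℂ) = ((q ^ (2 * α) : ℝ) : ℂ) * (q : ℂ) ^ 2 := by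
    simpa using (hpow 0).symm
  rw [jC_eq_jSeries, ha]
  refine isQDiffSol_jSeries hQ fun i => ?_
  rw [hpow, sub_ne_zero, ne_comm]
  refine ofReal_rpow_ne_one hq0 hq1.ne fun h => hα i ?_
  linarith

lemma isQDiffSol_jC_neg (hq0 : 0 < q) (hq1 : q < 1) {ν : ℝ} (hν : ∀ i : ℕ, ν ≠ i + 1) :
    IsQDiffSol q ((q ^ (-(2 * ν)) : ℝ) : ℂ) (jC q (-ν)) := by
  simpa only [mul_neg] using isQDiffSol_jC hq0 hq1 (α := -ν) fun i h => hν i (by linarith)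

lemma isQDiffSol_gammaC (hq0 : 0 < q) (hq1 : q < 1) {ν : ℝ} (hν : ∀ i : ℕ, ν ≠ i + 1) :
    IsQDiffSol q ((q ^ (2 * ν) : ℝ) : ℂ) (gammaC q ν) :=
  (isQDiffSol_jC_neg hq0 hq1 hν).comp_mul_left (ofReal_rpow_two_mul_mul_neg hq0 ν)
    (ofReal_rpow_neg_sq hq0 ν) (ofReal_mul_cpow_neg_two_mul hq0 ν)

lemma jC_mul_gammaC_sub (hq0 : 0 < q) (hq1 : q < 1) {ν : ℝ} (hν : ∀ k : ℤ, ν ≠ k) (x : ℂ) :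
    jC q ν x * gammaC q ν (q * x) - gammaC q ν x * jC q ν (q * x) =
      (((q ^ (-(2 * ν)) : ℝ) : ℂ) - 1) * x ^ ((-(2 * ν) : ℝ) : ℂ) := by
  have hQ : ‖(q : ℂ)‖ < 1 := by rwa [Complex.norm_real, Real.norm_of_nonneg hq0.le]
  have hJ := isQDiffSol_jC hq0 hq1 (α := ν) fun i h => hν (-(i + 1)) (by push_cast; linarith)
  have hF := isQDiffSol_jC_neg hq0 hq1 (ν := ν) fun i h => hν (i + 1) (by push_cast; linarith)
  have h := hJ.wronskian (φ := fun x => x ^ ((-(2 * ν) : ℝ) : ℂ)) hQ hF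
    (ofReal_rpow_two_mul_mul_neg hq0 ν) (ofReal_rpow_neg_sq hq0 ν)
    (continuous_jSeries hQ _) (continuous_jSeries hQ _) (ofReal_mul_cpow_neg_two_mul hq0 ν x)
  have h0 : jC q ν 0 * jC q (-ν) 0 = 1 := by simp only [jC_eq_jSeries, jSeries_zero, mul_one]
  rwa [h0, mul_one] at h

lemma threeTerm_recurrence_of_reduced (hq : 0 < q) (ν : ℝ) {lam : ℂ} {s p : ℤ → ℂ}
    (hs : ∀ m : ℤ, s (m + 1) - (1 + ((q ^ (2 * ν) : ℝ) : ℂ)) * s m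
        + ((q ^ (2 * ν) : ℝ) : ℂ) * s (m - 1) = -((q : ℂ) ^ (-m) * lam) ^ 2 * s m)
    (hp : ∀ m : ℤ, p m = ((q ^ (-(m : ℝ) * (ν + 1)) : ℝ) : ℂ) * s m) (n : ℕ) :
    ((q ^ (2 * (n : ℝ) + ν + 1) : ℝ) : ℂ) * p ((n : ℤ) + 1)
        - ((q ^ (2 * (n : ℝ)) : ℝ) : ℂ) * (1 + ((q ^ (2 * ν) : ℝ) : ℂ)) * p n
        + ((q ^ (2 * (n : ℝ) + ν - 1) : ℝ) : ℂ) * p ((n : ℤ) - 1) = -lam ^ 2 * p n := by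
  set e : ℂ := ((q ^ ((n : ℝ) * (1 - ν)) : ℝ) : ℂ)
  have h₁ : ((q ^ (2 * (n : ℝ) + ν + 1) : ℝ) : ℂ) * ((q ^ (-((n : ℝ) + 1) * (ν + 1)) : ℝ) : ℂ)
      = e := ofReal_rpow_mul_ofReal_rpow hq (by ring)
  have h₂ : ((q ^ (2 * (n : ℝ)) : ℝ) : ℂ) * ((q ^ (-(n : ℝ) * (ν + 1)) : ℝ) : ℂ) = e :=
    ofReal_rpow_mul_ofReal_rpow hq (by ring)
  have h₃ : ((q ^ (2 * (n : ℝ) + ν - 1) : ℝ) : ℂ) * ((q ^ (-((n : ℝ) - 1) * (ν + 1)) : ℝ) : ℂ)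
      = e * ((q ^ (2 * ν) : ℝ) : ℂ) := by
    rw [ofReal_rpow_mul_ofReal_rpow hq (u := (n : ℝ) * (1 - ν) + 2 * ν) (by ring),
      ofReal_rpow_mul_ofReal_rpow hq rfl]
  have h₄ : ((q ^ (-(n : ℝ) * (ν + 1)) : ℝ) : ℂ) = e * ((q : ℂ) ^ (-(n : ℤ))) ^ 2 := by
    rw [ofReal_zpow_neg_sq, ofReal_rpow_mul_ofReal_rpow hq]
    push_cast
    ring
  rw [hp, hp, hp]
  push_cast
  linear_combination e * hs n + s (n + 1) * h₁ - (1 + ((q ^ (2 * ν) : ℝ) : ℂ)) * s n * h₂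
    + s (n - 1) * h₃ + lam ^ 2 * s n * h₄

noncomputable def closedForm (q ν : ℝ) (lam : ℂ) (m : ℤ) : ℂ :=
  ((q ^ (-(m : ℝ) * (ν + 1)) : ℝ) : ℂ) * lam ^ ((2 * ν : ℝ) : ℂ) *
    (((q ^ (-(2 * ν)) : ℝ) : ℂ) - 1)⁻¹ *
    (jC q ν ((q : ℂ) ^ (-m) * lam) * gammaC q ν ((q : ℂ) * lam)
      - gammaC q ν ((q : ℂ) ^ (-m) * lam) * jC q ν ((q : ℂ) * lam))

lemma closedForm_neg_one (q ν : ℝ) (lam : ℂ) : closedForm q ν lam (-1) = 0 := by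
  simp [closedForm, mul_comm]

lemma closedForm_zero (hq0 : 0 < q) (hq1 : q < 1) {ν : ℝ} (hν : ∀ k : ℤ, ν ≠ k) {lam : ℂ}
    (hlam : lam ≠ 0) : closedForm q ν lam 0 = 1 := by
  have hb : ((q ^ (-(2 * ν)) : ℝ) : ℂ) - 1 ≠ 0 :=
    sub_ne_zero.2 (ofReal_rpow_ne_one hq0 hq1.ne (by simpa using hν 0))
  have hpow : lam ^ ((2 * ν : ℝ) : ℂ) * lam ^ ((-(2 * ν) : ℝ) : ℂ) = 1 := by
    rw [← Complex.cpow_add _ _ hlam, ← Complex.ofReal_add, add_neg_cancel, Complex.ofReal_zero,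
      Complex.cpow_zero]
  simp only [closedForm, Int.cast_zero, neg_zero, zero_mul, Real.rpow_zero, Complex.ofReal_one,
    zpow_zero, one_mul, jC_mul_gammaC_sub hq0 hq1 hν]
  field_simp
  linear_combination hpow

lemma closedForm_recurrence (hq0 : 0 < q) (hq1 : q < 1) {ν : ℝ} (hν : ∀ k : ℤ, ν ≠ k)
    (lam : ℂ) (n : ℕ) :
    ((q ^ (2 * (n : ℝ) + ν + 1) : ℝ) : ℂ) * closedForm q ν lam ((n : ℤ) + 1)
        - ((q ^ (2 * (n : ℝ)) : ℝ) : ℂ) * (1 + ((q ^ (2 * ν) : ℝ) : ℂ)) * closedForm q ν lam n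
        + ((q ^ (2 * (n : ℝ) + ν - 1) : ℝ) : ℂ) * closedForm q ν lam ((n : ℤ) - 1) =
      -lam ^ 2 * closedForm q ν lam n := by
  set S : ℂ → ℂ := fun x => jC q ν x * gammaC q ν (q * lam) - gammaC q ν x * jC q ν (q * lam)
  have hS : IsQDiffSol q ((q ^ (2 * ν) : ℝ) : ℂ) S :=
    (isQDiffSol_jC hq0 hq1 fun i h => hν (-(i + 1)) (by push_cast; linarith))
      |>.mul_const_sub_mul_const
        (isQDiffSol_gammaC hq0 hq1 fun i h => hν (i + 1) (by push_cast; linarith)) _ _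
  set C : ℂ := lam ^ ((2 * ν : ℝ) : ℂ) * (((q ^ (-(2 * ν)) : ℝ) : ℂ) - 1)⁻¹
  refine threeTerm_recurrence_of_reduced hq0 ν (s := fun m => C * S ((q : ℂ) ^ (-m) * lam))
    (fun m => ?_) (fun m => by simp only [closedForm, S, C]; ring) n
  linear_combination C * (hS.zpow_recurrence (Complex.ofReal_ne_zero.2 hq0.ne') lam m)

end

theorem stmt11_general (q ν : ℝ) (hq0 : 0 < q) (hq1 : q < 1)
    (hνnotint : ∀ k : ℤ, ν ≠ (k : ℝ))
    (P : ℤ → ℂ → ℂ)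
    (hPinit : ∀ μ : ℂ, P (-1) μ = 0 ∧ P 0 μ = 1)
    (hPrec : ∀ (n : ℕ) (μ : ℂ),
        ((q ^ (2 * (n : ℝ) + ν + 1) : ℝ) : ℂ) * P ((n : ℤ) + 1) μ
        - ((q ^ (2 * (n : ℝ)) : ℝ) : ℂ) * (1 + ((q ^ (2 * ν) : ℝ) : ℂ)) * P (n : ℤ) μ
        + ((q ^ (2 * (n : ℝ) + ν - 1) : ℝ) : ℂ) * P ((n : ℤ) - 1) μ = μ * P (n : ℤ) μ) :
    ∀ (n : ℕ) (lam : ℂ), lam ≠ 0 →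
      P (n : ℤ) (-lam ^ 2) =
        ((q ^ (-(n : ℝ) * (ν + 1)) : ℝ) : ℂ) * lam ^ ((2 * ν : ℝ) : ℂ) *
          (((q ^ (-(2 * ν)) : ℝ) : ℂ) - 1)⁻¹ *
          (jC q ν ((q : ℂ) ^ (-(n : ℤ)) * lam) * gammaC q ν ((q : ℂ) * lam)
            - gammaC q ν ((q : ℂ) ^ (-(n : ℤ)) * lam) * jC q ν ((q : ℂ) * lam)) := by
  intro n lam hlam
  have h := eq_of_threeTerm_recurrence (u := fun m => P m (-lam ^ 2))
    (v := closedForm q ν lam)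
    (fun n => ((q ^ (2 * (n : ℝ) + ν + 1) : ℝ) : ℂ))
    (fun n => ((q ^ (2 * (n : ℝ)) : ℝ) : ℂ) * (1 + ((q ^ (2 * ν) : ℝ) : ℂ)) - lam ^ 2)
    (fun n => ((q ^ (2 * (n : ℝ) + ν - 1) : ℝ) : ℂ))
    (fun n => Complex.ofReal_ne_zero.2 (Real.rpow_pos_of_pos hq0 _).ne')
    (fun n => by linear_combination hPrec n (-lam ^ 2))
    (fun n => by linear_combination closedForm_recurrence hq0 hq1 hνnotint lam n)
    (by rw [(hPinit _).1, closedForm_neg_one])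
    (by rw [(hPinit _).2, closedForm_zero hq0 hq1 hνnotint hlam]) n
  simpa only [closedForm, Int.cast_natCast] using h

theorem stmt11 (q ν : ℝ) (hq0 : 0 < q) (hq1 : q < 1) (hν : -1 < ν)
    (hνnotint : ∀ k : ℤ, ν ≠ (k : ℝ))
    (P : ℤ → ℂ → ℂ)
    (hPinit : ∀ μ : ℂ, P (-1) μ = 0 ∧ P 0 μ = 1)
    (hPrec : ∀ (n : ℕ) (μ : ℂ),
        ((q ^ (2 * (n : ℝ) + ν + 1) : ℝ) : ℂ) * P ((n : ℤ) + 1) μ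
        - ((q ^ (2 * (n : ℝ)) : ℝ) : ℂ) * (1 + ((q ^ (2 * ν) : ℝ) : ℂ)) * P (n : ℤ) μ
        + ((q ^ (2 * (n : ℝ) + ν - 1) : ℝ) : ℂ) * P ((n : ℤ) - 1) μ = μ * P (n : ℤ) μ) :
    ∀ (n : ℕ) (lam : ℂ), lam ≠ 0 →
      P (n : ℤ) (-lam ^ 2) =
        ((q ^ (-(n : ℝ) * (ν + 1)) : ℝ) : ℂ) * lam ^ ((2 * ν : ℝ) : ℂ) *
          (((q ^ (-(2 * ν)) : ℝ) : ℂ) - 1)⁻¹ *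
          (jC q ν ((q : ℂ) ^ (-(n : ℤ)) * lam) * gammaC q ν ((q : ℂ) * lam)
            - gammaC q ν ((q : ℂ) ^ (-(n : ℤ)) * lam) * jC q ν ((q : ℂ) * lam)) :=
  stmt11_general q ν hq0 hq1 hνnotint P hPinit hPrec
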